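/- arXiv:2504.19783 — 3 statements merged into one kernel-verified Lean document; each statement's English description precedes it below -/
import Mathlib

section
/- Let G be a graph, c a proper k-colouring of G, and u, v adjacent vertices of G. Suppose there is a colour i ∈ [k] that does not appear on the closed neighbourhood of u nor on the closed neighbourhood of v under c. Let c_u be obtained from c by recolouring u to i, and c_v by recolouring v to i. Then c_u and c_v are proper k-colourings, and the only proper k-colouring adjacent (in the k-recolouring graph) to both c_u and c_v is c itself. -/
/-- A proper `k`-colouring of `G`: adjacent vertices receive distinct colours. -/
def ProperColoring {V : Type*} (G : SimpleGraph V) {k : ℕ} (c : V → Fin k) : Prop :=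
  ∀ ⦃a b : V⦄, G.Adj a b → c a ≠ c b

/-- `c` and `d` differ at exactly one vertex (adjacency in the recolouring graph). -/
def DiffExactlyOne {V : Type*} {k : ℕ} (c d : V → Fin k) : Prop :=
  ∃ w : V, c w ≠ d w ∧ ∀ x ≠ w, c x = d x

theorem stmt2 {V : Type*} [DecidableEq V] (G : SimpleGraph V) (k : ℕ)
    (c : V → Fin k) (hc : ProperColoring G c)
    (u v : V) (hadj : G.Adj u v) (i : Fin k)
    (hu : ∀ w, w = u ∨ G.Adj u w → c w ≠ i)
    (hv : ∀ w, w = v ∨ G.Adj v w → c w ≠ i) :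
    ProperColoring G (Function.update c u i) ∧
    ProperColoring G (Function.update c v i) ∧
    ∀ c' : V → Fin k, ProperColoring G c' →
      DiffExactlyOne c' (Function.update c u i) →
      DiffExactlyOne c' (Function.update c v i) →
      c' = c := by
  have huv : u ≠ v := hadj.ne
  have proper : ∀ z : V, (∀ w, w = z ∨ G.Adj z w → c w ≠ i) →
      ProperColoring G (Function.update c z i) := by
    intro z hz a b hab
    rcases eq_or_ne a z with rfl | ha
    · rw [Function.update_self, Function.update_of_ne hab.ne']
      exact fun h => hz b (Or.inr hab) h.symm
    · rw [Function.update_of_ne ha]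
      rcases eq_or_ne b z with rfl | hb
      · rw [Function.update_self]
        exact hz a (Or.inr hab.symm)
      · rw [Function.update_of_ne hb]
        exact hc hab
  refine ⟨proper u hu, proper v hv, ?_⟩
  intro c' hc' ⟨w1, hw1, hw1'⟩ ⟨w2, hw2, hw2'⟩
  -- values
  have hcu : c u ≠ i := hu u (Or.inl rfl)
  have hcv : c v ≠ i := hv v (Or.inl rfl)
  have hw1u : w1 = u := by
    by_contra h
    -- then c' u = update c u i u = i
    have h1 : c' u = i := by rw [hw1' u (Ne.symm h), Function.update_self]
    rcases eq_or_ne w2 u with rfl | h2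
    · -- c' v = update c v i v = i  (v ≠ w2 = u)
      have h2' : c' v = i := by rw [hw2' v huv.symm, Function.update_self]
      exact hc' hadj (h1.trans h2'.symm)
    · have : c' u = Function.update c v i u := hw2' u h2.symm
      rw [Function.update_of_ne huv, h1] at this
      exact hcu this.symm
  have hw2v : w2 = v := by
    by_contra h
    have h2 : c' v = i := by rw [hw2' v (Ne.symm h), Function.update_self]
    have h1 : c' v = Function.update c u i v := by
      apply hw1'; rw [hw1u]; exact huv.symm
    rw [Function.update_of_ne huv.symm, h2] at h1
    exact hcv h1.symm
  subst hw1u hw2v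
  funext x
  rcases eq_or_ne x w1 with rfl | hx1
  · have := hw2' x huv
    rwa [Function.update_of_ne huv] at this
  · rcases eq_or_ne x w2 with rfl | hx2
    · have := hw1' x huv.symm
      rwa [Function.update_of_ne huv.symm] at this
    · have := hw1' x hx1
      rwa [Function.update_of_ne hx1] at this
end

section
/- For every graph G, the chromatic number of the Mycielskian M(G) equals χ(G) + 1 (assuming G has at least one edge). -/
/-- The Mycielskian of a graph `G`.  Vertices `Sum.inl v` are the original
vertices, `Sum.inr (Sum.inl u)` are their shadow copies and `Sum.inr (Sum.inr ())`
is the apex vertex `w`, adjacent to every shadow vertex; the shadow `u_i` of `v_i`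
is adjacent to `v_j` whenever `v_i v_j` is an edge of `G`. -/
def mycielskian {V : Type*} (G : SimpleGraph V) : SimpleGraph (V ⊕ (V ⊕ Unit)) where
  Adj x y :=
    match x, y with
    | Sum.inl a, Sum.inl b => G.Adj a b
    | Sum.inl a, Sum.inr (Sum.inl b) => G.Adj a b
    | Sum.inr (Sum.inl a), Sum.inl b => G.Adj a b
    | Sum.inr (Sum.inl _), Sum.inr (Sum.inr _) => True
    | Sum.inr (Sum.inr _), Sum.inr (Sum.inl _) => True
    | _, _ => False
  symm := ⟨by
    rintro (a | a | a) (b | b | b) h <;> simp_all <;> exact h.symm⟩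
  loopless := ⟨by
    rintro (a | a | a) h <;> simp_all⟩

/-!
An `n`-colouring of `G` extends to `M(G)` by giving each shadow `u_i` the colour
of `v_i` and the apex a new colour.  Conversely, in an `(n+1)`-colouring of `M(G)` let `c₀` be
the colour of the apex; no shadow has colour `c₀`, so recolouring every `v_i` of colour `c₀`
with the colour of `u_i` gives a proper colouring of `G` avoiding `c₀`, as `u_i` is adjacent
to all neighbours of `v_i`.  Hence `M(G)` is `(n+1)`-colourable iff `G` is `n`-colourable,
and this shifts the chromatic number by one, also when it is infinite.
-/

namespace SimpleGraph

variable {V W : Type*} {G : SimpleGraph V} {n : ℕ}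

theorem chromaticNumber_eq_add_one_of_colorable_succ_iff [Nonempty W] {H : SimpleGraph W}
    (h : ∀ n, H.Colorable (n + 1) ↔ G.Colorable n) :
    H.chromaticNumber = G.chromaticNumber + 1 := by
  apply le_antisymm
  · cases hχ : G.chromaticNumber using ENat.recTopCoe with
    | top => simp
    | coe k =>
      have hk : G.Colorable k := chromaticNumber_le_iff_colorable.mp hχ.le
      exact_mod_cast ((h k).mpr hk).chromaticNumber_le
  · cases hχ : H.chromaticNumber using ENat.recTopCoe with
    | top => exact le_top
    | coe m =>
      obtain _ | k := m
      · exact (not_isEmpty_of_nonempty W (chromaticNumber_eq_zero_iff.mp hχ)).elim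
      · have hk : G.chromaticNumber ≤ k :=
          ((h k).mp (chromaticNumber_le_iff_colorable.mp hχ.le)).chromaticNumber_le
        push_cast
        gcongr

theorem Colorable.mycielskian (hG : G.Colorable n) : (mycielskian G).Colorable (n + 1) := by
  obtain ⟨c⟩ := hG
  refine ⟨Coloring.mk
    (fun | .inl v => (c v).castSucc | .inr (.inl v) => (c v).castSucc | .inr (.inr _) => Fin.last n)
    ?_⟩
  rintro (a | a | a) (b | b | b) hab <;> simp only [_root_.mycielskian] at hab <;> simp_all
  · exact c.valid hab
  · exact c.valid hab
  · exact c.valid hab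
  · exact (Fin.castSucc_lt_last (c b)).ne'

theorem Colorable.of_mycielskian (hM : (_root_.mycielskian G).Colorable (n + 1)) :
    G.Colorable n := by
  obtain ⟨c⟩ := hM
  set c₀ := c (.inr (.inr ()))
  have shadow_ne : ∀ v, c (.inr (.inl v)) ≠ c₀ := fun v => c.valid (by trivial)
  let c' : V → {x // x ≠ c₀} := fun v =>
    if h : c (.inl v) = c₀ then ⟨c (.inr (.inl v)), shadow_ne v⟩ else ⟨c (.inl v), h⟩
  have valid : ∀ {a b}, G.Adj a b → c' a ≠ c' b := by
    intro a b hab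
    have hvv : c (.inl a) ≠ c (.inl b) := c.valid hab
    have huv : c (.inr (.inl a)) ≠ c (.inl b) := c.valid hab
    have hvu : c (.inl a) ≠ c (.inr (.inl b)) := c.valid hab
    simp only [c', ne_eq]
    split_ifs <;> simp_all
  simpa [Fintype.card_subtype_compl] using (Coloring.mk c' valid).colorable

theorem mycielskian_colorable_succ_iff : (mycielskian G).Colorable (n + 1) ↔ G.Colorable n :=
  ⟨Colorable.of_mycielskian, Colorable.mycielskian⟩

end SimpleGraph

theorem stmt6_general {V : Type*} (G : SimpleGraph V) :
    (mycielskian G).chromaticNumber = G.chromaticNumber + 1 :=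
  SimpleGraph.chromaticNumber_eq_add_one_of_colorable_succ_iff
    fun _ => SimpleGraph.mycielskian_colorable_succ_iff

theorem stmt6 {V : Type*} [Fintype V] (G : SimpleGraph V)
    (hedge : ∃ a b : V, G.Adj a b) :
    (mycielskian G).chromaticNumber = G.chromaticNumber + 1 :=
  stmt6_general G
end

section
/- Let G be a graph and C a connected component of the reconfiguration graph I^1_AR(G). Let X_1 be the set of vertices v of G with singleton {v} belonging to C, and X_2 = V(G) \ X_1. Then every vertex of X_1 is adjacent in G to every vertex of X_2, every nonempty independent set of G is contained entirely in X_1 or entirely in X_2, and C consists exactly of the nonempty independent sets contained in X_1. -/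
/-- `s` is an independent set of `G`: no two of its vertices are adjacent. -/
def IndepFinset {V : Type*} (G : SimpleGraph V) (s : Finset V) : Prop :=
  ∀ u ∈ s, ∀ v ∈ s, ¬ G.Adj u v

/-- The token jumping reconfiguration graph `I^k_J(G)`: vertices are the
independent sets of size `k`, two sets being adjacent iff their symmetric
difference has size 2 (one token moves to any other vertex). -/
def tokenJumping {V : Type*} [DecidableEq V] (G : SimpleGraph V) (k : ℕ) :
    SimpleGraph {s : Finset V // IndepFinset G s ∧ s.card = k} where
  Adj I J := (symmDiff I.1 J.1).card = 2
  symm := ⟨fun I J h => by (try simp only at h ⊢); rwa [symmDiff_comm]⟩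
  loopless := ⟨fun I h => by simp [symmDiff_self] at h⟩

/-- The token sliding reconfiguration graph `I^k_S(G)`: vertices are the
independent sets of size `k`, two sets being adjacent iff one is obtained from
the other by sliding a token along an edge of `G`. -/
def tokenSliding {V : Type*} [DecidableEq V] (G : SimpleGraph V) (k : ℕ) :
    SimpleGraph {s : Finset V // IndepFinset G s ∧ s.card = k} where
  Adj I J := ∃ u v : V, G.Adj u v ∧ symmDiff I.1 J.1 = {u, v}
  symm := ⟨fun I J ⟨u, v, ha, hs⟩ =>
    ⟨v, u, ha.symm, by rw [symmDiff_comm, hs, Finset.pair_comm]⟩⟩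
  loopless := ⟨fun I ⟨u, v, ha, hs⟩ => by
    simp only [symmDiff_self] at hs
    exact absurd hs.symm (Finset.insert_ne_empty _ _)⟩

/-- The token addition/removal reconfiguration graph `I^k_AR(G)`: vertices are
the independent sets of size at least `k`, two sets being adjacent iff they
differ by the addition or removal of a single vertex. -/
def tokenAR {V : Type*} [DecidableEq V] (G : SimpleGraph V) (k : ℕ) :
    SimpleGraph {s : Finset V // IndepFinset G s ∧ k ≤ s.card} where
  Adj I J := (symmDiff I.1 J.1).card = 1
  symm := ⟨fun I J h => by (try simp only at h ⊢); rwa [symmDiff_comm]⟩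
  loopless := ⟨fun I h => by simp [symmDiff_self] at h⟩

/-- The singleton `{v}` as a vertex of `I^1_AR(G)`. -/
def singletonVertex {V : Type*} [DecidableEq V] (G : SimpleGraph V) (v : V) :
    {s : Finset V // IndepFinset G s ∧ 1 ≤ s.card} :=
  ⟨{v}, fun a ha b hb => by
    simp only [Finset.mem_singleton] at ha hb
    rw [ha, hb]; exact G.loopless.irrefl v, by simp⟩

/-!
Adding the missing vertices one at a time connects an independent set with each independent
superset, so every nonempty independent set `I` lies in the component of `{x}` for each
`x ∈ I`. Hence the component of `I` is `C` exactly when all (equivalently, some) of its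
singletons lie in `C`, and if `v ∈ X1`, `w ∉ X1` were non-adjacent, the independent set
`{v, w}` would put `{v}` and `{w}` into the same component.
-/

namespace IndepFinset

variable {V : Type*} {G : SimpleGraph V}

lemma mono {s t : Finset V} (ht : IndepFinset G t) (hst : s ⊆ t) : IndepFinset G s :=
  fun u hu v hv => ht u (hst hu) v (hst hv)

lemma pair [DecidableEq V] {v w : V} (h : ¬ G.Adj v w) : IndepFinset G {v, w} := by
  simp only [IndepFinset, Finset.mem_insert, Finset.mem_singleton]
  rintro a (rfl | rfl) b (rfl | rfl)
  exacts [G.irrefl, h, fun h' => h h'.symm, G.irrefl]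

end IndepFinset

namespace tokenAR

variable {V : Type*} [DecidableEq V] {G : SimpleGraph V} {k : ℕ}

lemma adj_of_eq_insert {I J : {s : Finset V // IndepFinset G s ∧ k ≤ s.card}} {a : V}
    (ha : a ∉ I.1) (hJ : J.1 = insert a I.1) : (tokenAR G k).Adj I J := by
  change (symmDiff I.1 J.1).card = 1
  rw [symmDiff_of_le (hJ ▸ Finset.subset_insert a I.1), hJ, Finset.insert_sdiff_cancel ha,
    Finset.card_singleton]

lemma reachable_of_subset {I J : {s : Finset V // IndepFinset G s ∧ k ≤ s.card}}
    (hIJ : I.1 ⊆ J.1) : (tokenAR G k).Reachable I J := by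
  suffices h : ∀ d : Finset V, ∀ J : {s : Finset V // IndepFinset G s ∧ k ≤ s.card},
      J.1 = I.1 ∪ d → (tokenAR G k).Reachable I J from
    h J.1 J (Finset.union_eq_right.mpr hIJ).symm
  intro d
  induction d using Finset.induction_on with
  | empty =>
    intro J hJ
    rw [Subtype.ext (hJ.trans (Finset.union_empty I.1)).symm]
  | insert a d _ ih =>
    intro J hJ
    rw [Finset.union_insert] at hJ
    by_cases ha : a ∈ I.1 ∪ d
    · exact ih J (hJ.trans (Finset.insert_eq_of_mem ha))
    · let J' : {s : Finset V // IndepFinset G s ∧ k ≤ s.card} :=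
        ⟨I.1 ∪ d, J.2.1.mono (hJ ▸ Finset.subset_insert a _),
          I.2.2.trans (Finset.card_le_card Finset.subset_union_left)⟩
      exact (ih J' rfl).trans (adj_of_eq_insert (J := J) ha hJ).reachable

lemma connectedComponentMk_singletonVertex {I : {s : Finset V // IndepFinset G s ∧ 1 ≤ s.card}}
    {x : V} (hx : x ∈ I.1) :
    (tokenAR G 1).connectedComponentMk (singletonVertex G x) =
      (tokenAR G 1).connectedComponentMk I :=
  SimpleGraph.ConnectedComponent.sound
    (reachable_of_subset (Finset.singleton_subset_iff.mpr hx))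

lemma connectedComponentMk_eq_iff {C : (tokenAR G 1).ConnectedComponent}
    (I : {s : Finset V // IndepFinset G s ∧ 1 ≤ s.card}) :
    (tokenAR G 1).connectedComponentMk I = C ↔
      ∀ x ∈ I.1, (tokenAR G 1).connectedComponentMk (singletonVertex G x) = C := by
  refine ⟨fun h x hx => (connectedComponentMk_singletonVertex hx).trans h, fun h => ?_⟩
  obtain ⟨x, hx⟩ := Finset.card_pos.mp I.2.2
  exact (connectedComponentMk_singletonVertex hx).symm.trans (h x hx)

lemma adj_of_connectedComponentMk_ne {v w : V}
    (h : (tokenAR G 1).connectedComponentMk (singletonVertex G v) ≠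
      (tokenAR G 1).connectedComponentMk (singletonVertex G w)) : G.Adj v w := by
  by_contra hvw
  let P : {s : Finset V // IndepFinset G s ∧ 1 ≤ s.card} :=
    ⟨{v, w}, IndepFinset.pair hvw, Finset.card_pos.mpr (Finset.insert_nonempty v {w})⟩
  exact h ((connectedComponentMk_singletonVertex (I := P) (by simp [P])).trans
    (connectedComponentMk_singletonVertex (I := P) (by simp [P])).symm)

end tokenAR

theorem stmt17 {V : Type*} [DecidableEq V] (G : SimpleGraph V)
    (C : (tokenAR G 1).ConnectedComponent)
    (X1 : Set V)
    (hX1 : X1 = {v : V | (tokenAR G 1).connectedComponentMk (singletonVertex G v) = C}) :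
    -- every vertex of X1 is adjacent in G to every vertex of X2 = V \ X1
    (∀ v ∈ X1, ∀ w ∉ X1, G.Adj v w) ∧
    -- every nonempty independent set lies entirely in X1 or entirely in X2
    (∀ I : {s : Finset V // IndepFinset G s ∧ 1 ≤ s.card},
      (∀ x ∈ I.1, x ∈ X1) ∨ (∀ x ∈ I.1, x ∉ X1)) ∧
    -- C consists exactly of the nonempty independent sets contained in X1
    (∀ I : {s : Finset V // IndepFinset G s ∧ 1 ≤ s.card},
      (tokenAR G 1).connectedComponentMk I = C ↔ ∀ x ∈ I.1, x ∈ X1) := by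
  subst hX1
  have hC := fun I => tokenAR.connectedComponentMk_eq_iff (C := C) I
  refine ⟨fun v hv w hw => tokenAR.adj_of_connectedComponentMk_ne fun h => hw (h.symm.trans hv),
    fun I => ?_, hC⟩
  by_cases h : (tokenAR G 1).connectedComponentMk I = C
  · exact Or.inl ((hC I).mp h)
  · exact Or.inr fun x hx hxC =>
      h ((tokenAR.connectedComponentMk_singletonVertex hx).symm.trans hxC)
end
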